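/- Let α, β be negative rational numbers, H = (α,β/ℚ) the corresponding definite rational quaternion algebra with orthogonal involution ♯ given by (w + xi + yj + tk)^♯ = w + xi + yj − tk, and let O be a ♯-order of H. Let ι : H → ℍ be a ℚ-algebra homomorphism into the Hamilton quaternions satisfying ι(♯(x)) = (ι(x))^♯ for all x ∈ H. Let M = [[a,b],[c,d]] be a 2×2 matrix with entries in O satisfying M·σ̂(M) = σ̂(M)·M = 1. Then for every Hamilton quaternion z with π_k(z) > 1: ι(c)·z + ι(d) ≠ 0 and π_k((ι(a)·z + ι(b))·(ι(c)·z + ι(d))⁻¹) ≤ π_k(z), with equality if and only if c = 0 (i.e., if and only if M stabilizes ∞). -/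

import Mathlib

/-- The orthogonal involution `♯` on a quaternion algebra negating the `k`-component. -/
def kSharp {R : Type*} [CommRing R] {c₁ c₂ : R} (q : QuaternionAlgebra R c₁ 0 c₂) :
    QuaternionAlgebra R c₁ 0 c₂ := ⟨q.re, q.imI, q.imJ, -q.imK⟩

/-- The twisted adjugate involution `σ̂` on 2×2 matrices over a ring with involution. -/
def hatSigma {A : Type*} [Ring A] (σ : A → A) (M : Matrix (Fin 2) (Fin 2) A) :
    Matrix (Fin 2) (Fin 2) A :=
  !![σ (M 1 1), -σ (M 0 1); -σ (M 1 0), σ (M 0 0)]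

/-!
Write `A, B, C, D` for the images of `a, b, c, d` under `ι`. The relation `σ̂(M) M = 1` says that
`M` preserves the skew form `(u, v) ↦ v♯ u - u♯ v`; together with `v♯ (w - w♯) v = |v|² (w - w♯)`
and `w - w♯ = 2 π_k(w) k` this gives `π_k(M.z) |Cz + D|² = π_k(z)`. Elements of the order are
integral over `ℤ`, so their reduced norms are positive integers, and `ι` preserves norms.
If `c ≠ 0`, then `M σ̂(M) = 1` gives `C D♯ = D C♯`, so `C⁻¹ D` is `♯`-fixed, has no `k`-component,
and `|Cz + D|² = |C|² |z + C⁻¹ D|² ≥ π_k(z)² > 1`. If `c = 0`, then `A♯ D = 1` forces `|D|² = 1`.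
-/

open Quaternion Polynomial

lemma Matrix.map_fin_two {α β : Type*} (f : α → β) (a b c d : α) :
    (!![a, b; c, d]).map f = !![f a, f b; f c, f d] := by
  ext i j; fin_cases i <;> fin_cases j <;> rfl

section hatSigma

variable {A : Type*} [Ring A] {σ : A → A} {a b c d : A}

lemma hatSigma_mul_eq_one_iff :
    hatSigma σ !![a, b; c, d] * !![a, b; c, d] = 1 ↔
      σ d * a - σ b * c = 1 ∧ σ d * b - σ b * d = 0 ∧
      σ a * c - σ c * a = 0 ∧ σ a * d - σ c * b = 1 := by
  simp [hatSigma, Matrix.one_fin_two, sub_eq_add_neg, add_comm, and_assoc]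

lemma mul_hatSigma_eq_one_iff :
    !![a, b; c, d] * hatSigma σ !![a, b; c, d] = 1 ↔
      a * σ d - b * σ c = 1 ∧ b * σ a - a * σ b = 0 ∧
      c * σ d - d * σ c = 0 ∧ d * σ a - c * σ b = 1 := by
  simp [hatSigma, Matrix.one_fin_two, sub_eq_add_neg, add_comm, and_assoc]

variable {B : Type*} [Ring B] {τ : B → B} {f : A →+* B}

lemma hatSigma_map (hf : ∀ x, f (σ x) = τ (f x)) (M : Matrix (Fin 2) (Fin 2) A) :
    (hatSigma σ M).map f = hatSigma τ (M.map f) := by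
  ext i j; fin_cases i <;> fin_cases j <;> simp [hatSigma, hf]

lemma hatSigma_mul_map_eq_one (hf : ∀ x, f (σ x) = τ (f x)) {M : Matrix (Fin 2) (Fin 2) A}
    (h : hatSigma σ M * M = 1) : hatSigma τ (M.map f) * M.map f = 1 := by
  rw [← hatSigma_map hf, ← Matrix.map_mul, h, Matrix.map_one f (map_zero f) (map_one f)]

lemma mul_hatSigma_map_eq_one (hf : ∀ x, f (σ x) = τ (f x)) {M : Matrix (Fin 2) (Fin 2) A}
    (h : M * hatSigma σ M = 1) : M.map f * hatSigma τ (M.map f) = 1 := by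
  rw [← hatSigma_map hf, ← Matrix.map_mul, h, Matrix.map_one f (map_zero f) (map_one f)]

end hatSigma

namespace Quaternion

section CommRing

variable {R : Type*} [CommRing R]

/-- `kSharp` typed as an endomorphism of `ℍ[R]`: applied to `q : ℍ[R]`, `kSharp q` lives in the
defeq but distinct type `ℍ[R,-1,0,-1]`, which does not mix with the operations of `ℍ[R]`. -/
def sharp (q : ℍ[R]) : ℍ[R] := kSharp q

@[simp] lemma re_sharp (q : ℍ[R]) : (sharp q).re = q.re := rfl
@[simp] lemma imI_sharp (q : ℍ[R]) : (sharp q).imI = q.imI := rfl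
@[simp] lemma imJ_sharp (q : ℍ[R]) : (sharp q).imJ = q.imJ := rfl
@[simp] lemma imK_sharp (q : ℍ[R]) : (sharp q).imK = -q.imK := rfl

lemma sharp_add (p q : ℍ[R]) : sharp (p + q) = sharp p + sharp q := by
  ext <;> simp [add_comm]

lemma sharp_mul (p q : ℍ[R]) : sharp (p * q) = sharp q * sharp p := by
  ext <;> simp <;> ring

@[simp] lemma sharp_zero : sharp (0 : ℍ[R]) = 0 := by ext <;> simp

@[simp] lemma sharp_one : sharp (1 : ℍ[R]) = 1 := by ext <;> simp

@[simp] lemma normSq_sharp (q : ℍ[R]) : normSq (sharp q) = normSq q := by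
  simp [normSq_def']

lemma sharp_mul_sub_sharp_mul (v w : ℍ[R]) :
    sharp v * (w - sharp w) * v = normSq v • (w - sharp w) := by
  ext <;> simp [normSq_def'] <;> ring

lemma sharp_mul_sub_of_hatSigma_mul_eq_one {a b c d : ℍ[R]}
    (h : hatSigma sharp !![a, b; c, d] * !![a, b; c, d] = 1) (z : ℍ[R]) :
    sharp (c * z + d) * (a * z + b) - sharp (a * z + b) * (c * z + d) = z - sharp z := by
  obtain ⟨h₁, h₂, h₃, h₄⟩ := hatSigma_mul_eq_one_iff.mp h
  calc _ = (sharp d * a - sharp b * c) * z - sharp z * (sharp a * d - sharp c * b)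
        + (sharp d * b - sharp b * d) - sharp z * (sharp a * c - sharp c * a) * z := by
        simp only [sharp_add, sharp_mul]; noncomm_ring
    _ = z - sharp z := by rw [h₁, h₂, h₃, h₄]; noncomm_ring

end CommRing

lemma re_eq_zero_of_sq_eq_coe {q : ℍ[ℝ]} {r : ℝ} (hr : r < 0) (h : q ^ 2 = r) : q.re = 0 := by
  have hn : normSq q = -r := by
    have hsq := congrArg normSq h
    rw [map_pow, normSq_coe] at hsq
    exact (sq_eq_sq₀ normSq_nonneg (neg_nonneg.2 hr.le)).mp (by rw [hsq, neg_sq])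
  exact sq_eq_neg_normSq.mp (by rw [h, hn, coe_neg, neg_neg])

lemma sharp_inv (q : ℍ[ℝ]) : sharp q⁻¹ = (sharp q)⁻¹ := by
  rcases eq_or_ne q 0 with rfl | hq
  · simp
  · exact eq_inv_of_mul_eq_one_left (by rw [← sharp_mul, mul_inv_cancel₀ hq, sharp_one])

lemma imK_inv_mul_eq_zero {c d : ℍ[ℝ]} (hc : c ≠ 0) (h : c * sharp d = d * sharp c) :
    (c⁻¹ * d).imK = 0 := by
  have hc' : sharp c ≠ 0 := by rwa [← normSq_ne_zero, normSq_sharp, normSq_ne_zero]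
  have hfix : sharp (c⁻¹ * d) = c⁻¹ * d := by
    rw [sharp_mul, sharp_inv, mul_inv_eq_iff_eq_mul₀ hc', mul_assoc, eq_inv_mul_iff_mul_eq₀ hc, h]
  have := congrArg QuaternionAlgebra.imK hfix
  rw [imK_sharp] at this
  linarith

lemma imK_sq_le_normSq (q : ℍ[ℝ]) : q.imK ^ 2 ≤ normSq q := by
  rw [normSq_def']
  nlinarith [sq_nonneg q.re, sq_nonneg q.imI, sq_nonneg q.imJ]

lemma one_lt_normSq_mul_add {c d z : ℍ[ℝ]} (hc : 1 ≤ normSq c) (hcd : c * sharp d = d * sharp c)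
    (hz : 1 < z.imK) : 1 < normSq (c * z + d) := by
  have hc0 : c ≠ 0 := by rintro rfl; norm_num at hc
  have hw : (z + c⁻¹ * d).imK = z.imK := by rw [imK_add, imK_inv_mul_eq_zero hc0 hcd, add_zero]
  have hfac : c * z + d = c * (z + c⁻¹ * d) := by rw [mul_add, mul_inv_cancel_left₀ hc0]
  have h1 : 1 < normSq (z + c⁻¹ * d) := by nlinarith [imK_sq_le_normSq (z + c⁻¹ * d)]
  rw [hfac, map_mul]
  nlinarith

lemma imK_moebius_mul_normSq {a b c d : ℍ[ℝ]}
    (h : hatSigma sharp !![a, b; c, d] * !![a, b; c, d] = 1) {z : ℍ[ℝ]} (hv : c * z + d ≠ 0) :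
    ((a * z + b) * (c * z + d)⁻¹).imK * normSq (c * z + d) = z.imK := by
  set w := (a * z + b) * (c * z + d)⁻¹
  have hu : a * z + b = w * (c * z + d) := (inv_mul_cancel_right₀ hv _).symm
  have hskew : z - sharp z = normSq (c * z + d) • (w - sharp w) := by
    rw [← sharp_mul_sub_of_hatSigma_mul_eq_one h, ← sharp_mul_sub_sharp_mul, hu, sharp_mul]
    noncomm_ring
  have := congrArg QuaternionAlgebra.imK hskew
  simp only [imK_sub, imK_sharp, imK_smul, smul_eq_mul] at this
  linarith

lemma imK_moebius_lt {a b c d : ℍ[ℝ]}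
    (h₁ : !![a, b; c, d] * hatSigma sharp !![a, b; c, d] = 1)
    (h₂ : hatSigma sharp !![a, b; c, d] * !![a, b; c, d] = 1)
    (hc : 1 ≤ normSq c) {z : ℍ[ℝ]} (hz : 1 < z.imK) :
    c * z + d ≠ 0 ∧ ((a * z + b) * (c * z + d)⁻¹).imK < z.imK := by
  have hcd : c * sharp d = d * sharp c := sub_eq_zero.mp (mul_hatSigma_eq_one_iff.mp h₁).2.2.1
  have hv := one_lt_normSq_mul_add hc hcd hz
  have hv0 : c * z + d ≠ 0 := by rintro h; rw [h, map_zero] at hv; linarith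
  have key := imK_moebius_mul_normSq h₂ hv0
  exact ⟨hv0, by nlinarith⟩

lemma imK_moebius_eq {a b d : ℍ[ℝ]}
    (h : hatSigma sharp !![a, b; 0, d] * !![a, b; 0, d] = 1)
    (ha : a = 0 ∨ 1 ≤ normSq a) (hd : d = 0 ∨ 1 ≤ normSq d) (z : ℍ[ℝ]) :
    0 * z + d ≠ 0 ∧ ((a * z + b) * (0 * z + d)⁻¹).imK = z.imK := by
  have had : sharp a * d = 1 := by simpa using (hatSigma_mul_eq_one_iff.mp h).2.2.2
  have hd1 : normSq d = 1 := by
    have hn := congrArg normSq had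
    rw [map_mul, normSq_sharp, map_one] at hn
    rcases ha with rfl | ha
    · simp at had
    rcases hd with rfl | hd
    · simp at had
    nlinarith
  have hd0 : 0 * z + d ≠ 0 := by rw [zero_mul, zero_add]; rintro rfl; simp at hd1
  refine ⟨hd0, ?_⟩
  simpa [hd1] using imK_moebius_mul_normSq h hd0

theorem imK_moebius_le {a b c d : ℍ[ℝ]}
    (h₁ : !![a, b; c, d] * hatSigma sharp !![a, b; c, d] = 1)
    (h₂ : hatSigma sharp !![a, b; c, d] * !![a, b; c, d] = 1)
    (ha : a = 0 ∨ 1 ≤ normSq a) (hc : c = 0 ∨ 1 ≤ normSq c) (hd : d = 0 ∨ 1 ≤ normSq d)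
    {z : ℍ[ℝ]} (hz : 1 < z.imK) :
    c * z + d ≠ 0 ∧ ((a * z + b) * (c * z + d)⁻¹).imK ≤ z.imK ∧
      (((a * z + b) * (c * z + d)⁻¹).imK = z.imK ↔ c = 0) := by
  rcases hc with rfl | hc
  · obtain ⟨hv, heq⟩ := imK_moebius_eq h₂ ha hd z
    exact ⟨hv, heq.le, iff_of_true heq rfl⟩
  · obtain ⟨hv, hlt⟩ := imK_moebius_lt h₁ h₂ hc hz
    have hc0 : c ≠ 0 := by rintro rfl; norm_num at hc
    exact ⟨hv, hlt.le, iff_of_false hlt.ne hc0⟩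

end Quaternion

section redNorm

variable {R : Type*} [CommRing R] {c₁ c₂ : R}

def redNorm (x : ℍ[R,c₁,0,c₂]) : R := (x * star x).re

lemma coe_redNorm (x : ℍ[R,c₁,0,c₂]) : ((redNorm x : R) : ℍ[R,c₁,0,c₂]) = x * star x :=
  (QuaternionAlgebra.mul_star_eq_coe x).symm

lemma redNorm_eq (x : ℍ[R,c₁,0,c₂]) :
    redNorm x = x.re ^ 2 - c₁ * x.imI ^ 2 - c₂ * x.imJ ^ 2 + c₁ * c₂ * x.imK ^ 2 := by
  simp only [redNorm, QuaternionAlgebra.re_mul, QuaternionAlgebra.re_star,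
    QuaternionAlgebra.imI_star, QuaternionAlgebra.imJ_star, QuaternionAlgebra.imK_star]
  ring

lemma redNorm_pos [LinearOrder R] [IsStrictOrderedRing R] (h₁ : c₁ < 0) (h₂ : c₂ < 0)
    {x : ℍ[R,c₁,0,c₂]} (hx : x ≠ 0) : 0 < redNorm x := by
  have h₁₂ : 0 < c₁ * c₂ := mul_pos_of_neg_of_neg h₁ h₂
  obtain h | h | h | h : x.re ≠ 0 ∨ x.imI ≠ 0 ∨ x.imJ ≠ 0 ∨ x.imK ≠ 0 := by
    contrapose! hx
    ext <;> simp [hx]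
  all_goals
    rw [redNorm_eq]
    have := pow_pos (abs_pos.2 h) 2
    rw [sq_abs] at this
    nlinarith [sq_nonneg x.re, sq_nonneg x.imI, sq_nonneg x.imJ, sq_nonneg x.imK]

noncomputable def redCharpoly (x : ℍ[R,c₁,0,c₂]) : R[X] :=
  X ^ 2 - C (2 * x.re) * X + C (redNorm x)

lemma redCharpoly_monic [Nontrivial R] (x : ℍ[R,c₁,0,c₂]) : (redCharpoly x).Monic := by
  unfold redCharpoly; monicity!

lemma natDegree_redCharpoly [Nontrivial R] (x : ℍ[R,c₁,0,c₂]) :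
    (redCharpoly x).natDegree = 2 := by
  unfold redCharpoly; compute_degree!

lemma coeff_zero_redCharpoly (x : ℍ[R,c₁,0,c₂]) : (redCharpoly x).coeff 0 = redNorm x := by
  simp [redCharpoly]

lemma aeval_redCharpoly (x : ℍ[R,c₁,0,c₂]) : aeval x (redCharpoly x) = 0 := by
  have hstar : star x = ↑(2 * x.re) - x := by
    simpa using QuaternionAlgebra.star_eq_two_re_sub x
  rw [redCharpoly, map_add, map_sub, map_mul, map_pow, aeval_X, aeval_C, aeval_C,
    QuaternionAlgebra.coe_algebraMap, coe_redNorm, hstar, mul_sub,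
    QuaternionAlgebra.coe_commutes, sq]
  abel

lemma eval_redCharpoly (x : ℍ[R,c₁,0,c₂]) (r : R) :
    (redCharpoly x).eval r = redNorm (x - ((r : R) : ℍ[R,c₁,0,c₂])) := by
  simp [redCharpoly, redNorm_eq]; ring

end redNorm

section Definite

variable {α β : ℚ}

lemma exists_intCast_eq_redNorm (hα : α < 0) (hβ : β < 0) {x : ℍ[ℚ,α,0,β]}
    (hx : IsIntegral ℤ x) : ∃ m : ℤ, (m : ℚ) = redNorm x := by
  by_cases hq : ∃ r : ℚ, x = r
  · obtain ⟨r, rfl⟩ := hq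
    have hr : IsIntegral ℤ r :=
      (isIntegral_algHom_iff ((Algebra.ofId ℚ ℍ[ℚ,α,0,β]).restrictScalars ℤ)
        (algebraMap ℚ ℍ[ℚ,α,0,β]).injective).mp hx
    obtain ⟨m, rfl⟩ := IsIntegrallyClosed.isIntegral_iff.mp hr
    exact ⟨m ^ 2, by simp [redNorm_eq]⟩
  · rw [not_exists] at hq
    have hirr : Irreducible (redCharpoly x) :=
      irreducible_of_degree_le_three_of_not_isRoot (by simp [natDegree_redCharpoly])
        fun r hr ↦ (redNorm_pos hα hβ (sub_ne_zero.2 (hq r))).ne'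
          (by rwa [← eval_redCharpoly])
    obtain ⟨f, hf, hfx⟩ := hx
    have hdvd : redCharpoly x ∣ f.map (algebraMap ℤ ℚ) := by
      rw [minpoly.eq_of_irreducible_of_monic hirr (aeval_redCharpoly x) (redCharpoly_monic x)]
      exact minpoly.dvd ℚ x (by rwa [aeval_map_algebraMap, aeval_def])
    obtain ⟨g, hg⟩ := IsIntegrallyClosed.eq_map_mul_C_of_dvd ℚ hf hdvd
    rw [(redCharpoly_monic x).leadingCoeff, C_1, mul_one] at hg
    exact ⟨g.coeff 0, by rw [← coeff_zero_redCharpoly, ← hg, coeff_map, eq_intCast]⟩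

lemma one_le_redNorm_of_mem (hα : α < 0) (hβ : β < 0) {O : Subring ℍ[ℚ,α,0,β]}
    (hO : O.toAddSubgroup.FG) {x : ℍ[ℚ,α,0,β]} (hx : x ∈ O) (hx0 : x ≠ 0) : 1 ≤ redNorm x := by
  have hint : IsIntegral ℤ x :=
    IsIntegral.of_mem_of_fg (subalgebraOfSubring O)
      ((Submodule.fg_iff_addSubgroup_fg _).mpr hO) x hx
  obtain ⟨m, hm⟩ := exists_intCast_eq_redNorm hα hβ hint
  have hm0 : (0 : ℚ) < m := hm ▸ redNorm_pos hα hβ hx0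
  rw [← hm]
  exact_mod_cast Int.cast_pos.mp hm0

end Definite

section Embedding

open QuaternionAlgebra

variable {α β : ℚ} (ι : ℍ[ℚ,α,0,β] →ₐ[ℚ] ℍ[ℝ])

lemma re_map_eq_re (hα : α < 0) (hβ : β < 0) (hι : ∀ x, ι (kSharp x) = sharp (ι x))
    (x : ℍ[ℚ,α,0,β]) : (ι x).re = x.re := by
  let e : QuaternionAlgebra.Basis ℍ[ℚ,α,0,β] α 0 β := .self ℚ
  have hdecomp : ι x = algebraMap ℚ _ x.re + x.imI • ι e.i + x.imJ • ι e.j + x.imK • ι e.k := by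
    conv_lhs => rw [← lift.apply_symm_apply ι]
    rfl
  have hi : (ι e.i).re = 0 := re_eq_zero_of_sq_eq_coe (r := α) (by exact_mod_cast hα)
    (by rw [sq, ← map_mul, e.i_mul_i]; simp [Quaternion.coe_ratCast])
  have hj : (ι e.j).re = 0 := re_eq_zero_of_sq_eq_coe (r := β) (by exact_mod_cast hβ)
    (by rw [sq, ← map_mul, e.j_mul_j]; simp [Quaternion.coe_ratCast])
  have hk : (ι e.k).re = 0 := by
    have h := congrArg QuaternionAlgebra.re (hι e.k)
    have hk' : kSharp e.k = -e.k := by ext <;> simp [kSharp, e]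
    rw [hk', map_neg, Quaternion.re_neg, re_sharp] at h
    linarith
  rw [hdecomp]
  simp [hi, hj, hk]

lemma map_star_eq_star_map (hα : α < 0) (hβ : β < 0) (hι : ∀ x, ι (kSharp x) = sharp (ι x))
    (x : ℍ[ℚ,α,0,β]) : ι (star x) = star (ι x) := by
  rw [QuaternionAlgebra.star_eq_two_re_sub, zero_mul, add_zero, map_sub, ← coe_algebraMap,
    AlgHom.commutes, Quaternion.star_eq_two_re_sub, re_map_eq_re ι hα hβ hι,
    IsScalarTower.algebraMap_apply ℚ ℝ ℍ[ℝ]]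
  simp

lemma normSq_map_eq_redNorm (hα : α < 0) (hβ : β < 0) (hι : ∀ x, ι (kSharp x) = sharp (ι x))
    (x : ℍ[ℚ,α,0,β]) : normSq (ι x) = redNorm x := by
  apply Quaternion.coe_injective
  rw [← Quaternion.self_mul_star, ← map_star_eq_star_map ι hα hβ hι, ← map_mul, ← coe_redNorm,
    ← coe_algebraMap, AlgHom.commutes]
  exact (Quaternion.coe_ratCast _).symm

lemma map_eq_zero_iff_of_definite (hα : α < 0) (hβ : β < 0)
    (hι : ∀ x, ι (kSharp x) = sharp (ι x)) {x : ℍ[ℚ,α,0,β]} : ι x = 0 ↔ x = 0 := by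
  refine ⟨fun hx ↦ by_contra fun hx0 ↦ ?_, fun hx ↦ hx ▸ map_zero ι⟩
  have := normSq_map_eq_redNorm ι hα hβ hι x
  rw [hx, map_zero] at this
  exact (redNorm_pos hα hβ hx0).ne (by exact_mod_cast this)

lemma map_eq_zero_or_one_le_normSq (hα : α < 0) (hβ : β < 0)
    (hι : ∀ x, ι (kSharp x) = sharp (ι x)) {O : Subring ℍ[ℚ,α,0,β]} (hO : O.toAddSubgroup.FG)
    {x : ℍ[ℚ,α,0,β]} (hx : x ∈ O) : ι x = 0 ∨ 1 ≤ normSq (ι x) := by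
  rcases eq_or_ne x 0 with rfl | hx0
  · exact .inl (map_zero ι)
  · rw [normSq_map_eq_redNorm ι hα hβ hι]
    exact .inr (by exact_mod_cast one_le_redNorm_of_mem hα hβ hO hx hx0)

end Embedding

theorem orbit_goes_down_general (α β : ℚ) (hα : α < 0) (hβ : β < 0)
    (O : Subring (QuaternionAlgebra ℚ α 0 β))
    (hOfg : O.toAddSubgroup.FG)
    (ι : QuaternionAlgebra ℚ α 0 β →ₐ[ℚ] Quaternion ℝ)
    (hι : ∀ x : QuaternionAlgebra ℚ α 0 β, ι (kSharp x) = kSharp (ι x))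
    (a b c d : QuaternionAlgebra ℚ α 0 β)
    (ha : a ∈ O) (hc : c ∈ O) (hd : d ∈ O)
    (hM : !![a, b; c, d] * hatSigma kSharp !![a, b; c, d] = 1 ∧
          hatSigma kSharp !![a, b; c, d] * !![a, b; c, d] = 1) :
    ∀ z : Quaternion ℝ, 1 < z.imK →
      ι c * z + ι d ≠ 0 ∧
      ((ι a * z + ι b) * (ι c * z + ι d)⁻¹).imK ≤ z.imK ∧
      (((ι a * z + ι b) * (ι c * z + ι d)⁻¹).imK = z.imK ↔ c = 0) := by
  intro z hz
  have hι' : ∀ x, ι.toRingHom (kSharp x) = sharp (ι.toRingHom x) := hι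
  have h₁ := mul_hatSigma_map_eq_one hι' hM.1
  have h₂ := hatSigma_mul_map_eq_one hι' hM.2
  rw [Matrix.map_fin_two] at h₁ h₂
  have hdisc : ∀ x ∈ O, ι x = 0 ∨ 1 ≤ normSq (ι x) :=
    fun x hx ↦ map_eq_zero_or_one_le_normSq ι hα hβ hι hOfg hx
  rw [← map_eq_zero_iff_of_definite ι hα hβ hι]
  exact imK_moebius_le h₁ h₂ (hdisc a ha) (hdisc c hc) (hdisc d hd) hz

/-- for a `♯`-order `O` of a definite rational quaternion algebra and
`M = [[a,b],[c,d]] ∈ SL^♯(2,O)`, for any `z ∈ ℍ` with `π_k(z) > 1` one has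
`ι(c)·z + ι(d) ≠ 0` and `π_k(M.z) ≤ π_k(z)`, with equality iff `c = 0`. -/
theorem orbit_goes_down (α β : ℚ) (hα : α < 0) (hβ : β < 0)
    (O : Subring (QuaternionAlgebra ℚ α 0 β))
    (hOf : ∀ x ∈ O, kSharp x ∈ O)
    (hOfg : O.toAddSubgroup.FG)
    (hOspan : Submodule.span ℚ (O : Set (QuaternionAlgebra ℚ α 0 β)) = ⊤)
    (ι : QuaternionAlgebra ℚ α 0 β →ₐ[ℚ] Quaternion ℝ)
    (hι : ∀ x : QuaternionAlgebra ℚ α 0 β, ι (kSharp x) = kSharp (ι x))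
    (a b c d : QuaternionAlgebra ℚ α 0 β)
    (ha : a ∈ O) (hb : b ∈ O) (hc : c ∈ O) (hd : d ∈ O)
    (hM : !![a, b; c, d] * hatSigma kSharp !![a, b; c, d] = 1 ∧
          hatSigma kSharp !![a, b; c, d] * !![a, b; c, d] = 1) :
    ∀ z : Quaternion ℝ, 1 < z.imK →
      ι c * z + ι d ≠ 0 ∧
      ((ι a * z + ι b) * (ι c * z + ι d)⁻¹).imK ≤ z.imK ∧
      (((ι a * z + ι b) * (ι c * z + ι d)⁻¹).imK = z.imK ↔ c = 0) :=
  orbit_goes_down_general α β hα hβ O hOfg ι hι a b c d ha hc hd hM
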